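/- For all integers n ≥ 0, c_{9,3}(9n+2) ≡ 0 (mod 27). -/

import Mathlib

/-!
The weight of a part size of multiplicity `m` is `c m = 9 + 36 (m - 1) + 84 binom(m - 1, 2)`,
which is always divisible by `3`, is divisible by `9` when `3 ∤ m`, and depends modulo `27` only
on `m mod 9` (for `m ≥ 1`). Since `3 ∤ N = 9n + 2`, a partition of `N` with at least two part
sizes has one whose multiplicity is prime to `3`, so its weight is divisible by `9 * 3`. What
remains are the partitions `d^(N/d)` with `d ∣ N`, contributing `∑_{d ∣ N} c d`. Pairing `d`
with `N / d`, whose product is `≡ 2 (mod 9)`, a finite check on residues shows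
`c d + c (N / d) ≡ 0 (mod 27)`, so twice the sum vanishes modulo `27`.
-/

/-- The number of (k,j)-colored partitions of n: for each partition of n, each
part size with multiplicity m contributes a factor counting the ways to color
its parts with at most j of the k colors. -/
def ckj (k j n : ℕ) : ℕ :=
  ∑ P : n.Partition, ∏ s ∈ P.parts.toFinset,
    ∑ i ∈ Finset.Icc 1 j, Nat.choose k i * Nat.choose (P.parts.count s - 1) (i - 1)

theorem Nat.div_ne_zero_of_mem_divisors {n d : ℕ} (hd : d ∈ n.divisors) : n / d ≠ 0 :=
  (Nat.div_pos (Nat.divisor_le hd) (Nat.pos_of_mem_divisors hd)).ne'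

namespace Nat.Partition

variable {n : ℕ}

def prodCount {M : Type*} [CommMonoid M] (g : ℕ → M) (P : n.Partition) : M :=
  ∏ s ∈ P.parts.toFinset, g (P.parts.count s)

theorem exists_not_dvd_count {p : ℕ} (P : n.Partition) (hp : ¬ p ∣ n) :
    ∃ s ∈ P.parts.toFinset, ¬ p ∣ P.parts.count s := by
  by_contra! h
  obtain ⟨u, hu⟩ := Multiset.exists_smul_of_dvd_count P.parts
    fun a ha => h a (Multiset.mem_toFinset.mpr ha)
  exact hp ⟨u.sum, by rw [← P.parts_sum, hu, Multiset.sum_nsmul, smul_eq_mul]⟩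

theorem mul_dvd_prodCount {M : Type*} [CommMonoid M] {g : ℕ → M} {p : ℕ} {q r : M}
    (P : n.Partition) (hp : ¬ p ∣ n) (hcard : P.parts.toFinset.card ≠ 1)
    (hq : ∀ m, q ∣ g m) (hr : ∀ m, ¬ p ∣ m → r ∣ g m) : r * q ∣ P.prodCount g := by
  obtain ⟨s, hs, hps⟩ := P.exists_not_dvd_count hp
  obtain ⟨t, ht⟩ : (P.parts.toFinset.erase s).Nonempty := by
    have := Finset.card_pos.mpr ⟨s, hs⟩
    rw [← Finset.card_pos, Finset.card_erase_of_mem hs]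
    omega
  rw [prodCount, ← Finset.mul_prod_erase _ _ hs, ← Finset.mul_prod_erase _ _ ht, ← mul_assoc]
  exact (mul_dvd_mul (hr _ hps) (hq _)).mul_right _

def ofDivisor {d : ℕ} (hd : d ∈ n.divisors) : n.Partition where
  parts := Multiset.replicate (n / d) d
  parts_pos hi := Multiset.eq_of_mem_replicate hi ▸ Nat.pos_of_mem_divisors hd
  parts_sum := by
    rw [Multiset.sum_replicate, smul_eq_mul, Nat.div_mul_cancel (Nat.dvd_of_mem_divisors hd)]

theorem toFinset_parts_ofDivisor {d : ℕ} (hd : d ∈ n.divisors) :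
    (ofDivisor hd).parts.toFinset = {d} := by
  rw [ofDivisor, Multiset.toFinset_replicate, if_neg (div_ne_zero_of_mem_divisors hd)]

theorem sum_prodCount_filter_card_eq_one {M : Type*} [CommSemiring M] (g : ℕ → M) :
    ∑ P : n.Partition with P.parts.toFinset.card = 1, P.prodCount g =
      ∑ d ∈ n.divisors, g (n / d) := by
  symm
  refine Finset.sum_bij (fun d hd => ofDivisor hd) ?_ ?_ ?_ ?_
  · intro d hd
    simp [toFinset_parts_ofDivisor hd]
  · intro d₁ hd₁ d₂ hd₂ heq
    have hmem : d₁ ∈ (ofDivisor hd₁).parts := by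
      simp [← Multiset.mem_toFinset, toFinset_parts_ofDivisor hd₁]
    rw [heq] at hmem
    exact Multiset.eq_of_mem_replicate hmem
  · intro P hP
    obtain ⟨hcard, d, hd⟩ :=
      (Multiset.toFinset_card_eq_one_iff P.parts).mp (Finset.mem_filter.mp hP).2
    rw [Multiset.nsmul_singleton] at hd
    have hn : Multiset.card P.parts * d = n := by
      have hsum := P.parts_sum
      rwa [hd, Multiset.sum_replicate, smul_eq_mul] at hsum
    have hd0 : d ≠ 0 := by
      rintro rfl
      exact P.parts_pos (hd ▸ Multiset.mem_replicate.mpr ⟨hcard, rfl⟩) |>.ne' rfl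
    have hdiv : d ∈ n.divisors :=
      Nat.mem_divisors.mpr ⟨Dvd.intro_left _ hn, hn ▸ mul_ne_zero hcard hd0⟩
    refine ⟨d, hdiv, Nat.Partition.ext ?_⟩
    change Multiset.replicate (n / d) d = P.parts
    rw [Nat.div_eq_of_eq_mul_left (Nat.pos_of_ne_zero hd0) hn.symm, ← hd]
  · intro d hd
    rw [prodCount, toFinset_parts_ofDivisor hd, Finset.prod_singleton, ofDivisor,
      Multiset.count_replicate_self]

end Nat.Partition

theorem Nat.dvd_sum_divisors_of_dvd_add {q n : ℕ} (hq : q.Coprime 2) (g : ℕ → ℕ)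
    (h : ∀ d ∈ n.divisors, q ∣ g d + g (n / d)) : q ∣ ∑ d ∈ n.divisors, g d := by
  refine hq.dvd_of_dvd_mul_left ?_
  rw [two_mul]
  nth_rw 2 [← Nat.sum_div_divisors]
  rw [← Finset.sum_add_distrib]
  exact Finset.dvd_sum h

def colorWeight (k j m : ℕ) : ℕ :=
  ∑ i ∈ Finset.Icc 1 j, k.choose i * (m - 1).choose (i - 1)

theorem ckj_eq_sum_prodCount (k j n : ℕ) :
    ckj k j n = ∑ P : n.Partition, P.prodCount (colorWeight k j) :=
  rfl

theorem colorWeight_nine_three (m : ℕ) :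
    colorWeight 9 3 m = 9 + 36 * (m - 1) + 84 * (m - 1).choose 2 := by
  rw [colorWeight, show Finset.Icc 1 3 = {1, 2, 3} from rfl, Finset.sum_insert (by decide),
    Finset.sum_insert (by decide), Finset.sum_singleton]
  change 9 * (m - 1).choose 0 + (36 * (m - 1).choose 1 + 84 * (m - 1).choose 2) = _
  rw [Nat.choose_zero_right, Nat.choose_one_right]
  ring

theorem three_dvd_colorWeight_nine_three (m : ℕ) : 3 ∣ colorWeight 9 3 m := by
  rw [colorWeight_nine_three]
  omega

theorem colorWeight_nine_three_add_nine {m : ℕ} (hm : 1 ≤ m) :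
    colorWeight 9 3 (m + 9) = colorWeight 9 3 m + 27 * (124 + 28 * (m - 1)) := by
  have hstep : ∀ u, (u + 1).choose 2 = u + u.choose 2 := fun u => by
    rw [Nat.choose_succ_succ, Nat.choose_one_right]
  have hchoose : ∀ t, (t + 9).choose 2 = t.choose 2 + 9 * t + 36 := by
    intro t
    induction t with
    | zero => rfl
    | succ t ih =>
      rw [show t + 1 + 9 = t + 9 + 1 by ring, hstep (t + 9), hstep t, ih]
      ring
  rw [colorWeight_nine_three, colorWeight_nine_three, show m + 9 - 1 = m - 1 + 9 by omega,
    hchoose]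
  ring

theorem colorWeight_nine_three_add_mul_nine_modEq {r : ℕ} (hr : 1 ≤ r) (q : ℕ) :
    colorWeight 9 3 (r + 9 * q) ≡ colorWeight 9 3 r [MOD 27] := by
  induction q with
  | zero => rfl
  | succ q ih =>
    rw [show r + 9 * (q + 1) = r + 9 * q + 9 by ring, colorWeight_nine_three_add_nine (by omega)]
    exact (Nat.modEq_iff_dvd' (Nat.le_add_right _ _)).mpr (by simp) |>.symm.trans ih

theorem colorWeight_nine_three_modEq_mod_nine {m : ℕ} (hm : m % 9 ≠ 0) :
    colorWeight 9 3 m ≡ colorWeight 9 3 (m % 9) [MOD 27] := by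
  conv_lhs => rw [← Nat.mod_add_div m 9]
  exact colorWeight_nine_three_add_mul_nine_modEq (Nat.pos_of_ne_zero hm) _

theorem nine_dvd_colorWeight_nine_three {m : ℕ} (hm : ¬ 3 ∣ m) : 9 ∣ colorWeight 9 3 m := by
  have hres : ∀ r < 9, ¬ 3 ∣ r → 9 ∣ colorWeight 9 3 r := by decide
  rw [(colorWeight_nine_three_modEq_mod_nine (by omega)).dvd_iff (by norm_num)]
  exact hres _ (Nat.mod_lt _ (by norm_num)) (by omega)

theorem dvd_colorWeight_nine_three_add {a b : ℕ} (hab : a * b % 9 = 2) :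
    27 ∣ colorWeight 9 3 a + colorWeight 9 3 b := by
  have hres : ∀ a < 9, ∀ b < 9, a * b % 9 = 2 →
      27 ∣ colorWeight 9 3 a + colorWeight 9 3 b := by
    decide
  have ha : a % 9 ≠ 0 := fun h => by simp [Nat.mul_mod, h] at hab
  have hb : b % 9 ≠ 0 := fun h => by simp [Nat.mul_mod, h] at hab
  rw [((colorWeight_nine_three_modEq_mod_nine ha).add
    (colorWeight_nine_three_modEq_mod_nine hb)).dvd_iff dvd_rfl]
  exact hres _ (Nat.mod_lt _ (by norm_num)) _ (Nat.mod_lt _ (by norm_num))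
    (by rw [← Nat.mul_mod, hab])

theorem c93_congruence (n : ℕ) : ckj 9 3 (9 * n + 2) ≡ 0 [MOD 27] := by
  set N := 9 * n + 2
  have hN : ¬ 3 ∣ N := by omega
  rw [Nat.modEq_zero_iff_dvd, ckj_eq_sum_prodCount,
    ← Finset.sum_filter_add_sum_filter_not _ fun P : N.Partition => P.parts.toFinset.card = 1]
  refine dvd_add ?_ (Finset.dvd_sum fun P hP => ?_)
  · rw [Nat.Partition.sum_prodCount_filter_card_eq_one, Nat.sum_div_divisors]
    refine Nat.dvd_sum_divisors_of_dvd_add (by norm_num) _ fun d hd =>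
      dvd_colorWeight_nine_three_add ?_
    rw [Nat.mul_div_cancel' (Nat.dvd_of_mem_divisors hd)]
    omega
  · exact Nat.Partition.mul_dvd_prodCount (q := 3) (r := 9) P hN (Finset.mem_filter.mp hP).2
      three_dvd_colorWeight_nine_three fun _ => nine_dvd_colorWeight_nine_three
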